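/- Let λ(q) be a monic complex polynomial of degree n+1 (n ≥ 1) whose critical points r_1, …, r_n are pairwise distinct and simple. Define c_i = (1/12)·( n/(n+1) + Σ_{k ≠ i} (λ(r_k) − λ(r_i)) / (λ″(r_k)(r_k − r_i)²) ). Then c_i = 1/24 for every i = 1, …, n. -/

import Mathlib

/-!
Since `λ'` is `(n+1)` times the nodal polynomial of the critical points,
`λ''(r_k) = (n+1) w_k` with `w_k = ∏_{j ≠ k} (r_k - r_j)`. The quotient
`ν = (λ - λ(r_i)) / (q - r_i)²` is monic of degree `n - 1`, so Lagrange interpolation at the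
`n` nodes `r_k` reads off its leading coefficient as `Σ_k ν(r_k) / w_k = 1`. For `k ≠ i` the
`k`-th term is `n + 1` times the `k`-th term of the sum defining `c_i`, while the term `k = i`
is `λ''(r_i) / (2 w_i) = (n+1)/2`. Hence that sum is `(1 - n) / (2(n+1))`, and
`c_i = (1/12)(n/(n+1) + (1-n)/(2(n+1))) = 1/24`.
-/

open Polynomial Finset Lagrange

namespace Polynomial

variable {R : Type*} [CommRing R]

lemma eval_derivative_X_sub_C_mul (c : R) (g : R[X]) :
    (derivative ((X - C c) * g)).eval c = g.eval c := by
  simp [derivative_mul]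

lemma exists_sub_C_eval_eq_X_sub_C_sq_mul {p : R[X]} {c : R}
    (hc : (derivative p).eval c = 0) :
    ∃ q : R[X], p - C (p.eval c) = (X - C c) ^ 2 * q ∧
      (derivative (derivative p)).eval c = 2 * q.eval c := by
  obtain ⟨g, hg⟩ := X_sub_C_dvd_sub_C_eval (p := p) (a := c)
  have hp' : derivative p = derivative ((X - C c) * g) := by
    rw [← hg, derivative_sub, derivative_C, sub_zero]
  obtain ⟨q, rfl⟩ : X - C c ∣ g := by
    rw [dvd_iff_isRoot, IsRoot, ← eval_derivative_X_sub_C_mul c g, ← hp', hc]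
  refine ⟨q, by rw [hg]; ring, ?_⟩
  rw [hp', derivative_mul, derivative_sub, derivative_X, derivative_C, sub_zero, one_mul,
    derivative_add, eval_add]
  simp only [eval_derivative_X_sub_C_mul]
  ring

lemma Monic.of_sub_C_eq_mul [Nontrivial R] {p f q : R[X]} {a : R} (hp : p.Monic)
    (hdeg : 0 < p.natDegree) (hf : f.Monic) (h : p - C a = f * q) :
    q.Monic ∧ f.natDegree + q.natDegree = p.natDegree := by
  have hpa : (p - C a).Monic :=
    hp.sub_of_left ((degree_C_le).trans_lt (natDegree_pos_iff_degree_pos.mp hdeg))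
  rw [h] at hpa
  have hq : q.Monic := hf.of_mul_monic_left hpa
  refine ⟨hq, ?_⟩
  rw [← hf.natDegree_mul hq, ← h, natDegree_sub_C]

end Polynomial

namespace Lagrange

variable {F : Type*} [Field F] {ι : Type*} {s : Finset ι} {v : ι → F}

lemma eq_C_leadingCoeff_mul_nodal (hvs : Set.InjOn v s) {p : F[X]} (hdeg : p.natDegree = #s)
    (hroot : ∀ i ∈ s, p.eval (v i) = 0) : p = C p.leadingCoeff * nodal s v := by
  rcases eq_or_ne p 0 with rfl | hp
  · simp
  refine eq_of_degree_le_of_eval_index_eq s hvs ?_ ?_ ?_ ?_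
  · rw [degree_eq_natDegree hp, hdeg]
  · rw [degree_C_mul (leadingCoeff_ne_zero.mpr hp), degree_nodal, degree_eq_natDegree hp, hdeg]
  · rw [leadingCoeff_mul, leadingCoeff_C, nodal_monic.leadingCoeff, mul_one]
  · intro i hi
    rw [hroot i hi, eval_mul, eval_nodal_at_node hi, mul_zero]

lemma derivative_eq_C_mul_nodal [CharZero F] (hvs : Set.InjOn v s) {p : F[X]} (hp : p.Monic)
    (hdeg : p.natDegree = #s + 1) (hroot : ∀ i ∈ s, (derivative p).eval (v i) = 0) :
    derivative p = C ((#s : F) + 1) * nodal s v := by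
  refine (eq_C_leadingCoeff_mul_nodal hvs (by simp [hdeg]) hroot).trans ?_
  rw [leadingCoeff_derivative, hp.leadingCoeff, hdeg, one_mul, Nat.cast_succ]

end Lagrange

theorem an_central_invariants_eq_general (n : ℕ) (lam : Polynomial ℂ)
    (hmonic : lam.Monic) (hdeg : lam.natDegree = n + 1)
    (r : Fin n → ℂ) (hinj : Function.Injective r)
    (hroot : ∀ k, (derivative lam).eval (r k) = 0)
    (i : Fin n) :
    (1 / 12 : ℂ) * ((n : ℂ) / ((n : ℂ) + 1) +
      ∑ k ∈ Finset.univ.erase i,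
        (lam.eval (r k) - lam.eval (r i)) /
          ((derivative (derivative lam)).eval (r k) * (r k - r i) ^ 2))
      = 1 / 24 := by
  set w : Fin n → ℂ := fun k => ∏ j ∈ univ.erase k, (r k - r j)
  have hw : ∀ k, w k ≠ 0 := fun k =>
    prod_ne_zero_iff.mpr fun j hj => sub_ne_zero.mpr (hinj.ne (mem_erase.mp hj).1.symm)
  have hlam' := derivative_eq_C_mul_nodal hinj.injOn hmonic (by rw [hdeg, card_fin])
    fun k _ => hroot k
  have hlam'' : ∀ k, (derivative (derivative lam)).eval (r k) = (n + 1) * w k := fun k => by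
    rw [hlam', derivative_C_mul, eval_mul, eval_C, card_fin,
      eval_nodal_derivative_eval_node_eq (mem_univ k), eval_nodal]
  obtain ⟨ν, hν, hν''⟩ := exists_sub_C_eval_eq_X_sub_C_sq_mul (hroot i)
  obtain ⟨hνmonic, hνdeg⟩ := hmonic.of_sub_C_eq_mul (by omega) ((monic_X_sub_C _).pow 2) hν
  have hsum : ∑ k, ν.eval (r k) / w k = 1 := by
    rw [natDegree_pow, natDegree_X_sub_C, hdeg] at hνdeg
    refine (leadingCoeff_eq_sum hinj.injOn ?_).symm.trans hνmonic.leadingCoeff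
    rw [degree_eq_natDegree hνmonic.ne_zero, card_fin]
    exact_mod_cast (by omega : n = ν.natDegree + 1)
  have hterm : ∀ k ∈ univ.erase i,
      (lam.eval (r k) - lam.eval (r i)) /
        ((derivative (derivative lam)).eval (r k) * (r k - r i) ^ 2) =
        ν.eval (r k) / w k / (n + 1) := fun k hk => by
    have hki : r k - r i ≠ 0 := sub_ne_zero.mpr (hinj.ne (mem_erase.mp hk).1)
    have hnum := congrArg (eval (r k)) hν
    simp only [eval_sub, eval_C, eval_mul, eval_pow, eval_X] at hnum
    rw [hnum, hlam'']
    field_simp [hw k]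
  have hterm_i : ν.eval (r i) / w i = (n + 1) / 2 := by
    rw [div_eq_div_iff (hw i) two_ne_zero, ← hlam'', hν'']
    ring
  rw [sum_congr rfl hterm, ← sum_div, sum_erase_eq_sub (mem_univ i), hsum, hterm_i]
  field_simp
  ring

/-- For a monic polynomial `λ` of degree `n+1` with pairwise distinct simple critical
points `r 1, …, r n`, the central invariants
`c_i = (1/12)·(n/(n+1) + Σ_{k ≠ i} (λ(r k) − λ(r i)) / (λ''(r k)(r k − r i)²))`
all equal `1/24`. -/
theorem an_central_invariants_eq (n : ℕ) (hn : 1 ≤ n) (lam : Polynomial ℂ)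
    (hmonic : lam.Monic) (hdeg : lam.natDegree = n + 1)
    (r : Fin n → ℂ) (hinj : Function.Injective r)
    (hroot : ∀ k, (derivative lam).eval (r k) = 0)
    (hsimple : ∀ k, (derivative (derivative lam)).eval (r k) ≠ 0)
    (i : Fin n) :
    (1 / 12 : ℂ) * ((n : ℂ) / ((n : ℂ) + 1) +
      ∑ k ∈ Finset.univ.erase i,
        (lam.eval (r k) - lam.eval (r i)) /
          ((derivative (derivative lam)).eval (r k) * (r k - r i) ^ 2))
      = 1 / 24 :=
  an_central_invariants_eq_general n lam hmonic hdeg r hinj hroot i
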